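/- arXiv:2210.00247 — 5 statements merged into one kernel-verified Lean document; each statement's English description precedes it below -/
import Mathlib

section
/- For a,b ∈ [0,1] with a + b ≠ 0 and α ∈ (0,1), the powers M_α^n of the matrix M_α = [[1-a+aα, aα], [(1-α)b, 1-bα]] converge as n → ∞ to the matrix (1/((1-α)a + αb)) · [[αb, αa], [(1-α)b, (1-α)a]]. -/
theorem stmt_10 (a b : ℝ) (ha : a ∈ Set.Icc (0:ℝ) 1) (hb : b ∈ Set.Icc (0:ℝ) 1)
    (hab : a + b ≠ 0) (α : ℝ) (hα : α ∈ Set.Ioo (0:ℝ) 1) :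
    ∀ i j : Fin 2,
      Filter.Tendsto
        (fun n : ℕ => ((Matrix.of ![![1 - a + a * α, a * α], ![(1 - α) * b, 1 - b * α]]) ^ n) i j)
        Filter.atTop
        (nhds (((1 : ℝ) / ((1 - α) * a + α * b)) •
          Matrix.of ![![α * b, α * a], ![(1 - α) * b, (1 - α) * a]] i j)) := by
  obtain ⟨ha0, ha1⟩ := ha
  obtain ⟨hb0, hb1⟩ := hb
  obtain ⟨hα0, hα1⟩ := hα
  set c : ℝ := (1 - α) * a + α * b with hc
  have hab' : 0 < a + b := lt_of_le_of_ne (by linarith) (Ne.symm hab)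
  have hcpos : 0 < c := by
    rcases lt_or_ge 0 a with h | h
    · nlinarith [mul_nonneg (le_of_lt hα0) hb0]
    · have hb' : 0 < b := by linarith
      nlinarith [mul_nonneg (by linarith : (0:ℝ) ≤ 1 - α) ha0]
  have hc0 : c ≠ 0 := ne_of_gt hcpos
  have hc1 : c ≤ 1 := by nlinarith
  have key : ∀ n : ℕ,
      (Matrix.of ![![1 - a + a * α, a * α], ![(1 - α) * b, 1 - b * α]]) ^ n =
      Matrix.of ![![(α * b + (1 - c) ^ n * ((1 - α) * a)) / c,
                    (α * a + (1 - c) ^ n * (-(α * a))) / c],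
                  ![((1 - α) * b + (1 - c) ^ n * (-((1 - α) * b))) / c,
                    ((1 - α) * a + (1 - c) ^ n * (α * b)) / c]] := by
    intro n
    induction n with
    | zero =>
      ext i j
      fin_cases i <;> fin_cases j <;>
        simp [Matrix.one_apply] <;> field_simp <;> ring
    | succ n ih =>
      rw [pow_succ, ih]
      ext i j
      fin_cases i <;> fin_cases j <;>
        simp [Matrix.mul_apply, Fin.sum_univ_two] <;> field_simp <;> ring
  have hlim : Filter.Tendsto (fun n : ℕ => (1 - c) ^ n) Filter.atTop (nhds 0) :=
    tendsto_pow_atTop_nhds_zero_of_lt_one (by linarith) (by linarith)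
  intro i j
  simp only [key]
  fin_cases i <;> fin_cases j <;>
    · simp only [Matrix.of_apply, Matrix.cons_val', Matrix.cons_val_zero, Matrix.cons_val_one,
        Matrix.head_cons, Matrix.head_fin_const, Matrix.empty_val', Matrix.cons_val_fin_one,
        smul_eq_mul, Fin.zero_eta, Fin.mk_one]
      convert ((hlim.mul_const _).const_add _).div_const c using 2 <;> simp <;> ring
end

section
/- For a,b ∈ [0,1] with a+b ≠ 0, α ∈ (0,1), and any (x_0, u_0) ∈ [0,α] × [0,1-α], the iterates (x_n, u_n) = W_α^n(x_0, u_0) converge to ((b x_0 + a u_0)/((1-α)a + αb)) · (α, 1-α), which is a fixed point of W_α. -/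
theorem stmt_11 (a b : ℝ) (ha : a ∈ Set.Icc (0:ℝ) 1) (hb : b ∈ Set.Icc (0:ℝ) 1)
    (hab : a + b ≠ 0) (α : ℝ) (hα : α ∈ Set.Ioo (0:ℝ) 1)
    (x₀ u₀ : ℝ) (hx : x₀ ∈ Set.Icc (0:ℝ) α) (hu : u₀ ∈ Set.Icc (0:ℝ) (1 - α)) :
    let Wα : ℝ × ℝ → ℝ × ℝ := fun q =>
      ((1 - a + a * α) * q.1 + a * α * q.2, (1 - α) * b * q.1 + (1 - b * α) * q.2)
    let L : ℝ × ℝ := (((b * x₀ + a * u₀) / ((1 - α) * a + α * b)) * α,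
                      ((b * x₀ + a * u₀) / ((1 - α) * a + α * b)) * (1 - α))
    Filter.Tendsto (fun n : ℕ => Wα^[n] (x₀, u₀)) Filter.atTop (nhds L) ∧ Wα L = L := by
  obtain ⟨ha0, ha1⟩ := ha
  obtain ⟨hb0, hb1⟩ := hb
  obtain ⟨hα0, hα1⟩ := hα
  intro Wα L
  set s : ℝ := (1 - α) * a + α * b with hsdef
  have hs : 0 < s := by
    rcases lt_or_eq_of_le ha0 with h | h
    · have : 0 < (1 - α) * a := mul_pos (by linarith) h
      nlinarith [mul_nonneg (le_of_lt hα0) hb0]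
    · have hbpos : 0 < b := by
        rcases lt_or_eq_of_le hb0 with h' | h'
        · exact h'
        · exfalso; apply hab; rw [← h, ← h']; norm_num
      have : 0 < α * b := mul_pos hα0 hbpos
      nlinarith [mul_nonneg (by linarith : (0:ℝ) ≤ 1 - α) ha0]
  have hs' : s ≠ 0 := ne_of_gt hs
  set c : ℝ := (b * x₀ + a * u₀) / s with hcdef
  set D : ℝ := (1 - α) * x₀ - α * u₀ with hDdef
  set lam : ℝ := 1 - s with hlamdef
  have hlam0 : 0 ≤ lam := by
    have : s ≤ 1 := by nlinarith
    linarith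
  have hlam1 : lam < 1 := by simp [hlamdef]; linarith
  -- closed form
  have key : ∀ n : ℕ, Wα^[n] (x₀, u₀) =
      (c * α + a * D * lam ^ n / s, c * (1 - α) - b * D * lam ^ n / s) := by
    intro n
    induction n with
    | zero =>
      simp only [Function.iterate_zero, id, pow_zero, Prod.mk.injEq]
      constructor
      · rw [hcdef, hDdef]; field_simp; rw [hsdef]; ring
      · rw [hcdef, hDdef]; field_simp; rw [hsdef]; ring
    | succ n ih =>
      rw [Function.iterate_succ_apply', ih]
      simp only [Wα, Prod.mk.injEq]
      constructor
      · field_simp [hcdef, hDdef, hlamdef]; ring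
      · field_simp [hcdef, hDdef, hlamdef]; ring
  constructor
  · have hpow : Filter.Tendsto (fun n : ℕ => lam ^ n) Filter.atTop (nhds 0) :=
      tendsto_pow_atTop_nhds_zero_of_lt_one hlam0 hlam1
    have h1 : Filter.Tendsto (fun n : ℕ => c * α + a * D * lam ^ n / s)
        Filter.atTop (nhds (c * α)) := by
      have := ((hpow.const_mul (a * D)).div_const s).const_add (c * α)
      simpa using this
    have h2 : Filter.Tendsto (fun n : ℕ => c * (1 - α) - b * D * lam ^ n / s)
        Filter.atTop (nhds (c * (1 - α))) := by
      have := (Filter.Tendsto.const_sub (c * (1 - α)) ((hpow.const_mul (b * D)).div_const s))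
      simpa using this
    have : Filter.Tendsto (fun n : ℕ =>
        ((c * α + a * D * lam ^ n / s, c * (1 - α) - b * D * lam ^ n / s) : ℝ × ℝ))
        Filter.atTop (nhds (c * α, c * (1 - α))) := h1.prodMk_nhds h2
    have hL : L = (c * α, c * (1 - α)) := rfl
    rw [hL]
    exact this.congr (fun n => (key n).symm)
  · simp only [Wα, L, Prod.mk.injEq]
    constructor
    · field_simp; ring
    · field_simp; ring
end

section
/- For a,b ∈ [0,1] with a+b ≠ 0 and any initial point t_0 = (x_0,y_0,u_0,v_0) ∈ S^3 with (x_0+y_0)(u_0+v_0) ≠ 0, the trajectory W^n(t_0) converges as n → ∞ to the point (A(x_0,u_0)(x_0+y_0), A(y_0,v_0)(x_0+y_0), A(x_0,u_0)(u_0+v_0), A(y_0,v_0)(u_0+v_0)), where A(x,u) = (bx + au)/((u_0+v_0)a + (x_0+y_0)b); moreover this limit is a fixed point of W. -/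
open Filter

noncomputable def W (a b : ℝ) : ℝ × ℝ × ℝ × ℝ → ℝ × ℝ × ℝ × ℝ :=
  fun p =>
    let x := p.1; let y := p.2.1; let u := p.2.2.1; let v := p.2.2.2
    (x + a * (y * u - x * v), y - a * (y * u - x * v),
     u - b * (y * u - x * v), v + b * (y * u - x * v))

def Simplex3 : Set (ℝ × ℝ × ℝ × ℝ) :=
  {p | 0 ≤ p.1 ∧ 0 ≤ p.2.1 ∧ 0 ≤ p.2.2.1 ∧ 0 ≤ p.2.2.2 ∧ p.1 + p.2.1 + p.2.2.1 + p.2.2.2 = 1}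

lemma closed_form (a b x y u v c : ℝ) (hc : c = (u+v)*a + (x+y)*b) (hc0 : c ≠ 0) (n : ℕ) :
    (W a b)^[n] (x, y, u, v) =
      (x + a*(y*u-x*v)*(1-(1-c)^n)/c, y - a*(y*u-x*v)*(1-(1-c)^n)/c,
       u - b*(y*u-x*v)*(1-(1-c)^n)/c, v + b*(y*u-x*v)*(1-(1-c)^n)/c) := by
  induction n with
  | zero => simp
  | succ n ih =>
      rw [Function.iterate_succ_apply', ih]
      simp only [W, Prod.mk.injEq]
      refine ⟨?_, ?_, ?_, ?_⟩ <;> (field_simp; subst hc; ring)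

theorem stmt_12 (a b : ℝ) (ha : a ∈ Set.Icc (0:ℝ) 1) (hb : b ∈ Set.Icc (0:ℝ) 1)
    (hab : a + b ≠ 0) (x₀ y₀ u₀ v₀ : ℝ) (hp : (x₀, y₀, u₀, v₀) ∈ Simplex3)
    (h : (x₀ + y₀) * (u₀ + v₀) ≠ 0) :
    let A : ℝ → ℝ → ℝ := fun x u => (b * x + a * u) / ((u₀ + v₀) * a + (x₀ + y₀) * b)
    let L : ℝ × ℝ × ℝ × ℝ :=
      (A x₀ u₀ * (x₀ + y₀), A y₀ v₀ * (x₀ + y₀), A x₀ u₀ * (u₀ + v₀), A y₀ v₀ * (u₀ + v₀))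
    Filter.Tendsto (fun n : ℕ => (W a b)^[n] (x₀, y₀, u₀, v₀)) Filter.atTop (nhds L) ∧
      W a b L = L := by
  intro A L
  obtain ⟨hx, hy, hu, hv, hsum⟩ := hp
  obtain ⟨hsne, htne⟩ := mul_ne_zero_iff.mp h
  have hs0 : 0 < x₀ + y₀ := lt_of_le_of_ne (by linarith) (Ne.symm hsne)
  have ht0 : 0 < u₀ + v₀ := lt_of_le_of_ne (by linarith) (Ne.symm htne)
  have hab0 : 0 < a + b := lt_of_le_of_ne (by linarith [ha.1, hb.1]) (Ne.symm hab)
  have hc0 : 0 < (u₀ + v₀) * a + (x₀ + y₀) * b := by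
    rcases lt_or_eq_of_le ha.1 with h1 | h1
    · nlinarith [mul_pos ht0 h1, mul_nonneg hs0.le hb.1]
    · have hbpos : 0 < b := by rw [← h1] at hab0; simpa using hab0
      nlinarith [mul_pos hs0 hbpos, mul_nonneg ht0.le ha.1]
  have hc1 : (u₀ + v₀) * a + (x₀ + y₀) * b ≤ 1 := by
    have h1 : (u₀ + v₀) * a ≤ u₀ + v₀ := mul_le_of_le_one_right ht0.le ha.2
    have h2 : (x₀ + y₀) * b ≤ x₀ + y₀ := mul_le_of_le_one_right hs0.le hb.2
    linarith
  have hcne : (u₀ + v₀) * a + (x₀ + y₀) * b ≠ 0 := hc0.ne'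
  have hr : |1 - ((u₀ + v₀) * a + (x₀ + y₀) * b)| < 1 :=
    abs_lt.mpr ⟨by linarith, by linarith⟩
  have h0 : Tendsto (fun n : ℕ => (1 - ((u₀ + v₀) * a + (x₀ + y₀) * b)) ^ n) atTop (nhds 0) :=
    tendsto_pow_atTop_nhds_zero_of_abs_lt_one hr
  set c := (u₀ + v₀) * a + (x₀ + y₀) * b with hcc
  set D := y₀ * u₀ - x₀ * v₀ with hD
  have hX : Tendsto (fun n : ℕ => x₀ + a * D * (1 - (1 - c) ^ n) / c) atTop
      (nhds (x₀ + a * D * (1 - 0) / c)) :=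
    Tendsto.const_add _ (((tendsto_const_nhds.sub h0).const_mul _).div_const _)
  have hY : Tendsto (fun n : ℕ => y₀ - a * D * (1 - (1 - c) ^ n) / c) atTop
      (nhds (y₀ - a * D * (1 - 0) / c)) :=
    Tendsto.const_sub _ (((tendsto_const_nhds.sub h0).const_mul _).div_const _)
  have hU : Tendsto (fun n : ℕ => u₀ - b * D * (1 - (1 - c) ^ n) / c) atTop
      (nhds (u₀ - b * D * (1 - 0) / c)) :=
    Tendsto.const_sub _ (((tendsto_const_nhds.sub h0).const_mul _).div_const _)
  have hV : Tendsto (fun n : ℕ => v₀ + b * D * (1 - (1 - c) ^ n) / c) atTop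
      (nhds (v₀ + b * D * (1 - 0) / c)) :=
    Tendsto.const_add _ (((tendsto_const_nhds.sub h0).const_mul _).div_const _)
  have htend := hX.prodMk (hY.prodMk (hU.prodMk hV))
  constructor
  · have hL : L = (x₀ + a * D * (1 - 0) / c, y₀ - a * D * (1 - 0) / c,
        u₀ - b * D * (1 - 0) / c, v₀ + b * D * (1 - 0) / c) := by
      show ((b * x₀ + a * u₀) / c * (x₀ + y₀), (b * y₀ + a * v₀) / c * (x₀ + y₀),
        (b * x₀ + a * u₀) / c * (u₀ + v₀), (b * y₀ + a * v₀) / c * (u₀ + v₀)) = _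
      simp only [Prod.mk.injEq, hD]
      refine ⟨?_, ?_, ?_, ?_⟩ <;> (field_simp; rw [hcc]; ring)
    rw [hL]
    have hkey := closed_form a b x₀ y₀ u₀ v₀ c hcc hcne
    simp only [← hD] at hkey
    simp only [hkey]
    rw [nhds_prod_eq, nhds_prod_eq, nhds_prod_eq]
    exact htend
  · show W a b (A x₀ u₀ * (x₀ + y₀), A y₀ v₀ * (x₀ + y₀), A x₀ u₀ * (u₀ + v₀),
      A y₀ v₀ * (u₀ + v₀)) = (A x₀ u₀ * (x₀ + y₀), A y₀ v₀ * (x₀ + y₀), A x₀ u₀ * (u₀ + v₀),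
      A y₀ v₀ * (u₀ + v₀))
    simp only [W, Prod.mk.injEq]
    refine ⟨?_, ?_, ?_, ?_⟩ <;> ring
end

section
/- For a,b ∈ [0,1] with a+b ≠ 0 and any initial point (x_0,y_0,u_0,v_0) ∈ S^3, writing (x_n,y_n,u_n,v_n) = W^n(x_0,y_0,u_0,v_0), the linkage disequilibrium y_n u_n - x_n v_n converges to 0 as n → ∞. -/
lemma W_iter (a b : ℝ) (p : ℝ × ℝ × ℝ × ℝ) (n : ℕ) :
    ((W a b)^[n] p).1 + ((W a b)^[n] p).2.1 = p.1 + p.2.1 ∧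
    ((W a b)^[n] p).2.2.1 + ((W a b)^[n] p).2.2.2 = p.2.2.1 + p.2.2.2 ∧
    ((W a b)^[n] p).2.1 * ((W a b)^[n] p).2.2.1 - ((W a b)^[n] p).1 * ((W a b)^[n] p).2.2.2
      = (1 - a * (p.2.2.1 + p.2.2.2) - b * (p.1 + p.2.1))^n *
        (p.2.1 * p.2.2.1 - p.1 * p.2.2.2) := by
  induction n with
  | zero => simp
  | succ n ih =>
    obtain ⟨h1, h2, h3⟩ := ih
    rw [Function.iterate_succ_apply']
    set q := (W a b)^[n] p with hq
    refine ⟨by simp [W]; linarith, by simp [W]; linarith, ?_⟩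
    have key : (W a b q).2.1 * (W a b q).2.2.1 - (W a b q).1 * (W a b q).2.2.2
        = (1 - a * (q.2.2.1 + q.2.2.2) - b * (q.1 + q.2.1)) *
          (q.2.1 * q.2.2.1 - q.1 * q.2.2.2) := by
      simp only [W]; ring
    rw [key, h1, h2, h3, pow_succ]; ring

theorem stmt_13 (a b : ℝ) (ha : a ∈ Set.Icc (0:ℝ) 1) (hb : b ∈ Set.Icc (0:ℝ) 1)
    (hab : a + b ≠ 0) (p : ℝ × ℝ × ℝ × ℝ) (hp : p ∈ Simplex3) :
    Filter.Tendsto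
      (fun n : ℕ =>
        ((W a b)^[n] p).2.1 * ((W a b)^[n] p).2.2.1 - ((W a b)^[n] p).1 * ((W a b)^[n] p).2.2.2)
      Filter.atTop (nhds 0) := by
  obtain ⟨hx, hy, hu, hv, hsum⟩ := hp
  obtain ⟨ha0, ha1⟩ := ha
  obtain ⟨hb0, hb1⟩ := hb
  set lam : ℝ := 1 - a * (p.2.2.1 + p.2.2.2) - b * (p.1 + p.2.1) with hlam
  set D0 : ℝ := p.2.1 * p.2.2.1 - p.1 * p.2.2.2 with hD0
  have heq : (fun n : ℕ =>
      ((W a b)^[n] p).2.1 * ((W a b)^[n] p).2.2.1 - ((W a b)^[n] p).1 * ((W a b)^[n] p).2.2.2)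
      = fun n : ℕ => lam ^ n * D0 := by
    funext n; exact (W_iter a b p n).2.2
  rw [heq]
  by_cases hD : D0 = 0
  · simp [hD]
  · -- then lam < 1
    have hs1 : p.1 + p.2.1 ≤ 1 := by linarith
    have hs0 : 0 ≤ p.1 + p.2.1 := by linarith
    have huv : p.2.2.1 + p.2.2.2 = 1 - (p.1 + p.2.1) := by linarith
    have hlam0 : 0 ≤ lam := by
      rw [hlam, huv]
      nlinarith [mul_le_one₀ ha1 hs0 hs1, mul_le_one₀ hb1 hs0 hs1]
    have hlam1 : lam < 1 := by
      rcases lt_or_ge lam 1 with h | h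
      · exact h
      · exfalso
        have h1 : a * (p.2.2.1 + p.2.2.2) + b * (p.1 + p.2.1) ≤ 0 := by
          rw [hlam] at h; linarith
        have ha' : a * (p.2.2.1 + p.2.2.2) = 0 := by
          nlinarith
        have hb' : b * (p.1 + p.2.1) = 0 := by nlinarith
        rcases mul_eq_zero.mp ha' with haz | hsz
        · rcases mul_eq_zero.mp hb' with hbz | hsz'
          · exact hab (by rw [haz, hbz]; ring)
          · have hx0 : p.1 = 0 := by linarith
            have hy0 : p.2.1 = 0 := by linarith
            exact hD (by rw [hD0, hx0, hy0]; ring)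
        · have hu0 : p.2.2.1 = 0 := by linarith
          have hv0 : p.2.2.2 = 0 := by linarith
          exact hD (by rw [hD0, hu0, hv0]; ring)
    have := (tendsto_pow_atTop_nhds_zero_of_lt_one hlam0 hlam1).mul_const D0
    simpa using this
end

section
/- For a,b ∈ [0,1] with a+b ≠ 0, every fixed point of W in S^3 is non-hyperbolic: the Jacobian matrix of W at any fixed point has 1 as an eigenvalue. -/
theorem stmt_17 (a b : ℝ) (ha : a ∈ Set.Icc (0:ℝ) 1) (hb : b ∈ Set.Icc (0:ℝ) 1)
    (hab : a + b ≠ 0) (p : ℝ × ℝ × ℝ × ℝ) (hp : p ∈ Simplex3) (hfix : W a b p = p) :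
    ∃ w : ℝ × ℝ × ℝ × ℝ, w ≠ 0 ∧ fderiv ℝ (W a b) p w = w := by
  obtain ⟨hx0, hy0, hu0, hv0, hsum⟩ := hp
  have hx : HasFDerivAt (fun q : ℝ × ℝ × ℝ × ℝ => q.1)
      (ContinuousLinearMap.fst ℝ ℝ (ℝ × ℝ × ℝ)) p := hasFDerivAt_fst
  have hy : HasFDerivAt (fun q : ℝ × ℝ × ℝ × ℝ => q.2.1)
      ((ContinuousLinearMap.fst ℝ ℝ (ℝ × ℝ)).comp
        (ContinuousLinearMap.snd ℝ ℝ (ℝ × ℝ × ℝ))) p :=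
    hasFDerivAt_fst.comp p hasFDerivAt_snd
  have hu : HasFDerivAt (fun q : ℝ × ℝ × ℝ × ℝ => q.2.2.1)
      ((ContinuousLinearMap.fst ℝ ℝ ℝ).comp
        ((ContinuousLinearMap.snd ℝ ℝ (ℝ × ℝ)).comp
          (ContinuousLinearMap.snd ℝ ℝ (ℝ × ℝ × ℝ)))) p :=
    hasFDerivAt_fst.comp p (hasFDerivAt_snd.comp p hasFDerivAt_snd)
  have hv : HasFDerivAt (fun q : ℝ × ℝ × ℝ × ℝ => q.2.2.2)
      ((ContinuousLinearMap.snd ℝ ℝ ℝ).comp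
        ((ContinuousLinearMap.snd ℝ ℝ (ℝ × ℝ)).comp
          (ContinuousLinearMap.snd ℝ ℝ (ℝ × ℝ × ℝ)))) p :=
    hasFDerivAt_snd.comp p (hasFDerivAt_snd.comp p hasFDerivAt_snd)
  have hQ := (hy.mul hu).sub (hx.mul hv)
  have h1 := hx.add (hQ.const_mul a)
  have h2 := hy.sub (hQ.const_mul a)
  have h3 := hu.sub (hQ.const_mul b)
  have h4 := hv.add (hQ.const_mul b)
  have hW := HasFDerivAt.prodMk h1 (HasFDerivAt.prodMk h2 (HasFDerivAt.prodMk h3 h4))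
  have hW' : HasFDerivAt (W a b) _ p := hW
  refine ⟨(p.2.2.1, p.2.2.2, -p.1, -p.2.1), ?_, ?_⟩
  · intro h
    rw [Prod.ext_iff, Prod.ext_iff, Prod.ext_iff] at h
    obtain ⟨h1, h2, h3, h4⟩ := h
    simp only [Prod.fst_zero, Prod.snd_zero, neg_eq_zero] at h1 h2 h3 h4
    rw [h1, h2, h3, h4] at hsum
    norm_num at hsum
  · rw [hW'.fderiv]
    simp only [ContinuousLinearMap.prod_apply, ContinuousLinearMap.add_apply,
      ContinuousLinearMap.sub_apply, ContinuousLinearMap.comp_apply,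
      ContinuousLinearMap.smul_apply, ContinuousLinearMap.coe_fst',
      ContinuousLinearMap.coe_snd', ContinuousLinearMap.coe_smul',
      Pi.smul_apply, smul_eq_mul]
    refine Prod.ext ?_ (Prod.ext ?_ (Prod.ext ?_ ?_)) <;> simp <;> ring_nf <;> simp <;> ring_nf
end
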